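/- For every c ∈ [−1,1], the real symmetric 3×3 matrix M'(c) is negative semidefinite: xᵀ M'(c) x ≤ 0 for all x ∈ ℝ³. -/
import Mathlib


open Matrix

/-- The matrix `M'(c)`: the leading principal 3×3 submatrix of 12h times the
interior interface quadratic-form matrix of the two-point-block BFD scheme. -/
noncomputable def Mpmat (c : ℝ) : Matrix (Fin 3) (Fin 3) ℝ :=
  !![8*c-19,      (71-40*c)/3,  8*c-5;
     (71-40*c)/3, (56*c-169)/3, (113-40*c)/3;
     8*c-5,       (113-40*c)/3, (56*c-169)/3]

/-- For every `c ∈ [-1,1]`, `M'(c)` is negative semidefinite: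
`xᵀ M'(c) x ≤ 0` for all `x ∈ ℝ³`. -/
theorem Mpmat_negSemidef (c : ℝ) (hc : c ∈ Set.Icc (-1 : ℝ) 1) (x : Fin 3 → ℝ) :
    x ⬝ᵥ (Mpmat c *ᵥ x) ≤ 0 := by
  obtain ⟨h1, h2⟩ := hc
  have key : x ⬝ᵥ (Mpmat c *ᵥ x) =
      x 0 * ((8*c-19) * x 0 + (71-40*c)/3 * x 1 + (8*c-5) * x 2)
      + x 1 * ((71-40*c)/3 * x 0 + (56*c-169)/3 * x 1 + (113-40*c)/3 * x 2)
      + x 2 * ((8*c-5) * x 0 + (113-40*c)/3 * x 1 + (56*c-169)/3 * x 2) := by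
    simp [Mpmat, mulVec, dotProduct, Fin.sum_univ_three]
  rw [key]
  set a := x 0
  set b := x 1
  set d := x 2
  have hm1 : (0:ℝ) ≤ 1 - c := by linarith
  have hp1 : (0:ℝ) ≤ 1 + c := by linarith
  nlinarith [mul_nonneg hm1 (sq_nonneg (27*a - 37*b + 13*d)),
    mul_nonneg hm1 (sq_nonneg (41*b - 56*d)),
    mul_nonneg hm1 (sq_nonneg d),
    mul_nonneg hp1 (sq_nonneg (33*a - 31*b - 9*d)),
    mul_nonneg hp1 (sq_nonneg (173*b - 168*d)),
    mul_nonneg hp1 (sq_nonneg d)]
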